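/- (Whipple's transformation for terminating balanced-type ₄F₃ series.) Let n ∈ ℕ and A, B, C, D, E, F ∈ ℂ with D+E+F = A+B+C+1−n. Assume (D)_k ≠ 0, (E)_k ≠ 0, (F)_k ≠ 0, (A+1−n−E)_k ≠ 0, and (A+1−n−F)_k ≠ 0 for all k ≤ n. Then Σ_{k=0}^{n} [(−n)_k (A)_k (B)_k (C)_k] / [k! (D)_k (E)_k (F)_k] = [(E−A)_n (F−A)_n] / [(E)_n (F)_n] · Σ_{k=0}^{n} [(−n)_k (A)_k (D−B)_k (D−C)_k] / [k! (D)_k (A+1−n−E)_k (A+1−n−F)_k]. -/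

import Mathlib

/-!
The key tool is the Pfaff–Saalschütz summation in denominator-free form,
`∑ₖ C(n,k) (a)ₖ (b)ₖ (c+k)ₙ₋ₖ (c-a-b)ₙ₋ₖ = (c-a)ₙ (c-b)ₙ`,
proved by induction on `n`: after Pascal's rule, the induction hypotheses at `(a, b, c)` and
`(a+1, b+1, c+1)` account for everything except a telescoping sum.

For Whipple's transformation, clear the denominators, expand `(B)ₖ (C)ₖ` by Saalschütz with
parameters `(D-B, D-C, D)`, and exchange the order of the resulting double sum. The balancing
condition `D + E + F = A + B + C + 1 - n` makes each inner sum a balanced Saalschütz sum again,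
which evaluates to the Pochhammer factors of the right-hand side.
-/
open Finset

/-- Pochhammer symbol `(a)_k = a (a+1) ⋯ (a+k-1)`. -/
noncomputable def poch (a : ℂ) (k : ℕ) : ℂ := ∏ i ∈ Finset.range k, (a + i)

/-- The Wilson polynomial `W_n(z; t1,t2,t3,t4)` in the variable `z` (with `x = -z²`). -/
noncomputable def wilson (n : ℕ) (z t1 t2 t3 t4 : ℂ) : ℂ :=
  poch (t1 + t2) n * poch (t1 + t3) n * poch (t1 + t4) n *
    ∑ k ∈ Finset.range (n + 1),
      (poch (-(n : ℂ)) k * poch (t1 + t2 + t3 + t4 + (n : ℂ) - 1) k *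
        poch (t1 + z) k * poch (t1 - z) k) /
      ((k.factorial : ℂ) * poch (t1 + t2) k * poch (t1 + t3) k * poch (t1 + t4) k)

@[simp] lemma poch_zero (a : ℂ) : poch a 0 = 1 := prod_range_zero _

lemma poch_succ (a : ℂ) (k : ℕ) : poch a (k + 1) = poch a k * (a + k) := prod_range_succ _ _

lemma poch_add (a : ℂ) (m l : ℕ) : poch a (m + l) = poch a m * poch (a + m) l := by
  simp only [poch, prod_range_add, Nat.cast_add, add_assoc]

lemma poch_succ' (a : ℂ) (k : ℕ) : poch a (k + 1) = a * poch (a + 1) k := by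
  rw [add_comm k, poch_add, Nat.cast_one, poch_succ, poch_zero, Nat.cast_zero, one_mul, add_zero]

lemma poch_mul_poch_sub (a : ℂ) {k n : ℕ} (hk : k ≤ n) :
    poch a k * poch (a + k) (n - k) = poch a n := by
  rw [← poch_add, Nat.add_sub_cancel' hk]

lemma poch_reflect {a b : ℂ} {n : ℕ} (h : a + b + n = 1) : poch a n = (-1) ^ n * poch b n := by
  have hsign : (-1 : ℂ) ^ n = ∏ _i ∈ range n, (-1) := by simp
  rw [hsign, poch, poch, ← prod_mul_distrib, ← prod_range_reflect]
  refine prod_congr rfl fun i hi => ?_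
  have hi := mem_range.mp hi
  rw [Nat.cast_sub (by omega), Nat.cast_sub (by omega)]
  push_cast
  linear_combination h

lemma poch_eq_ascPochhammer_eval (a : ℂ) (k : ℕ) : poch a k = (ascPochhammer ℂ k).eval a := by
  induction k with
  | zero => simp
  | succ k ih => rw [poch_succ, ih, ascPochhammer_succ_eval]

lemma poch_neg_natCast (n k : ℕ) : poch (-n) k = (-1) ^ k * n.choose k * k.factorial := by
  rw [poch_eq_ascPochhammer_eval, ascPochhammer_eval_neg_eq_descPochhammer,
    descPochhammer_eval_eq_descFactorial, Nat.descFactorial_eq_factorial_mul_choose]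
  push_cast
  ring

noncomputable def saalschutzTerm (a b c : ℂ) (i j : ℕ) : ℂ :=
  poch a i * poch b i * poch (c + i) j * poch (c - a - b) j

lemma mul_mul_saalschutzTerm_add_one (a b c : ℂ) (i j : ℕ) :
    a * b * saalschutzTerm (a + 1) (b + 1) (c + 1) i j =
      poch a (i + 1) * poch b (i + 1) * poch (c + (i + 1 : ℕ)) j * poch (c - a - b - 1) j := by
  rw [saalschutzTerm, poch_succ', poch_succ',
    show c + 1 - (a + 1) - (b + 1) = c - a - b - 1 by ring,
    show c + 1 + (i : ℂ) = c + (i + 1 : ℕ) by push_cast; ring]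
  ring

-- The last summand telescopes when summed over `i`.
lemma saalschutzTerm_pascal (a b c : ℂ) {n i : ℕ} (hi : i ≤ n) :
    (n.choose i : ℂ) *
        (saalschutzTerm a b c i (n + 1 - i) + saalschutzTerm a b c (i + 1) (n - i)) =
      (c + n) * (c - a - b + n) * (n.choose i * saalschutzTerm a b c i (n - i)) +
      a * b * (n.choose i * saalschutzTerm (a + 1) (b + 1) (c + 1) i (n - i)) +
      (c + n) * (n.choose (i + 1) * (i + 1 : ℕ) * saalschutzTerm a b c (i + 1) (n - (i + 1)) -
        n.choose i * i * saalschutzTerm a b c i (n - i)) := by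
  obtain ⟨j, hj⟩ := Nat.exists_eq_add_of_le hi
  rw [mul_left_comm (a * b), mul_mul_saalschutzTerm_add_one, show n + 1 - i = j + 1 by omega,
    show n - i = j by omega]
  rcases j with _ | m
  · simp only [hj, add_zero, Nat.choose_self, Nat.choose_succ_self, Nat.cast_zero, saalschutzTerm,
      poch_succ, poch_zero]
    ring
  · have hch : (n.choose (i + 1) : ℂ) * (i + 1 : ℕ) = n.choose i * (m + 1 : ℕ) := by
      exact_mod_cast (Nat.choose_succ_right_eq _ _).trans (by congr 1; omega)
    have hc : ∀ k, poch (c + i) (k + 1) = (c + i) * poch (c + (i + 1 : ℕ)) k := fun k => by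
      rw [poch_succ']; push_cast; ring_nf
    have hs : poch (c - a - b - 1) (m + 1) = (c - a - b - 1) * poch (c - a - b) m := by
      rw [poch_succ', sub_add_cancel]
    have hn : (n : ℂ) = i + (m + 1) := by rw [hj]; push_cast; ring
    rw [show n - (i + 1) = m by omega, hn]
    simp only [saalschutzTerm, hc, hs, poch_succ (c + (i + 1 : ℕ)) m, poch_succ (c - a - b),
      poch_succ a i, poch_succ b i]
    push_cast at hch ⊢
    linear_combination -(c + i + m + 1) * (poch a i * (a + i)) * (poch b i * (b + i)) *
      poch (c + (i + 1)) m * poch (c - a - b) m * hch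

theorem pfaff_saalschutz (n : ℕ) (a b c : ℂ) :
    ∑ k ∈ range (n + 1), (n.choose k : ℂ) * saalschutzTerm a b c k (n - k) =
      poch (c - a) n * poch (c - b) n := by
  induction n generalizing a b c with
  | zero => simp [saalschutzTerm]
  | succ n ih =>
    have htelescope : ∑ k ∈ range (n + 1),
        ((n.choose (k + 1) : ℂ) * (k + 1 : ℕ) * saalschutzTerm a b c (k + 1) (n - (k + 1)) -
          n.choose k * k * saalschutzTerm a b c k (n - k)) = 0 := by
      rw [sum_range_sub (fun k => (n.choose k : ℂ) * k * saalschutzTerm a b c k (n - k))]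
      simp
    have hshift := ih (a + 1) (b + 1) (c + 1)
    rw [show c + 1 - (a + 1) = c - a by ring, show c + 1 - (b + 1) = c - b by ring] at hshift
    calc ∑ k ∈ range (n + 1 + 1), ((n + 1).choose k : ℂ) * saalschutzTerm a b c k (n + 1 - k)
        = ∑ k ∈ range (n + 1), (n.choose k : ℂ) *
            (saalschutzTerm a b c k (n + 1 - k) + saalschutzTerm a b c (k + 1) (n - k)) := by
          rw [sum_choose_succ_mul (saalschutzTerm a b c), ← sum_add_distrib]
          simp only [mul_add]
      _ = (c + n) * (c - a - b + n) * (poch (c - a) n * poch (c - b) n) +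
            a * b * (poch (c - a) n * poch (c - b) n) + (c + n) * 0 := by
          rw [sum_congr rfl fun k hk => saalschutzTerm_pascal a b c (mem_range_succ_iff.mp hk),
            sum_add_distrib, sum_add_distrib, ← mul_sum, ← mul_sum, ← mul_sum, ih, hshift,
            htelescope]
      _ = poch (c - a) (n + 1) * poch (c - b) (n + 1) := by
          rw [poch_succ, poch_succ]; ring

/-- The terminating `₃F₂(-n, a, b; c, d; 1)` evaluation, multiplied by `(c)ₙ (d)ₙ`. -/
theorem pfaff_saalschutz_balanced (n : ℕ) (a b c d : ℂ) (h : c + d + n = a + b + 1) :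
    ∑ k ∈ range (n + 1), (-1) ^ k * n.choose k * poch a k * poch b k * poch (c + k) (n - k) *
        poch (d + k) (n - k) =
      (-1) ^ n * poch (c - a) n * poch (c - b) n := by
  rw [mul_assoc _ (poch (c - a) n), ← pfaff_saalschutz, mul_sum]
  refine sum_congr rfl fun k hk => ?_
  have hk : k ≤ n := mem_range_succ_iff.mp hk
  have hd : poch (d + k) (n - k) = (-1) ^ (n - k) * poch (c - a - b) (n - k) :=
    poch_reflect (by push_cast [Nat.cast_sub hk]; linear_combination h)
  have hsign : (-1 : ℂ) ^ n = (-1) ^ k * (-1) ^ (n - k) := by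
    rw [← pow_add, Nat.add_sub_cancel' hk]
  rw [hd, hsign, saalschutzTerm]
  ring

/-- Both sides of Whipple's transformation multiplied by `(D)ₙ (E)ₙ (F)ₙ`. -/
theorem whipple_cleared (n : ℕ) (A B C D E F : ℂ) (hbal : D + E + F = A + B + C + 1 - n) :
    ∑ k ∈ range (n + 1), (-1) ^ k * n.choose k * poch A k * poch B k * poch C k *
        poch (D + k) (n - k) * poch (E + k) (n - k) * poch (F + k) (n - k) =
      (-1) ^ n * ∑ j ∈ range (n + 1), n.choose j * poch A j * poch (D - B) j * poch (D - C) j *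
        poch (D + j) (n - j) * poch (E - A) (n - j) * poch (A + 1 - n - F + j) (n - j) := by
  -- `G j m` is the summand of index `k = j + m` after expanding `(B)ₖ (C)ₖ`, split into the
  -- factors depending on `j` alone and a summand of a balanced Saalschütz sum of length `n - j`.
  set G : ℕ → ℕ → ℂ := fun j m =>
    ((-1) ^ j * n.choose j * poch A j * poch (D - B) j * poch (D - C) j * poch (D + j) (n - j)) *
      ((-1) ^ m * (n - j).choose m * poch (A + j) m * poch (B + C - D) m *
        poch (E + j + m) (n - j - m) * poch (F + j + m) (n - j - m)) with hG
  have hexpand : ∀ k ∈ range (n + 1),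
      (-1) ^ k * n.choose k * poch A k * poch B k * poch C k *
        poch (D + k) (n - k) * poch (E + k) (n - k) * poch (F + k) (n - k) =
      ∑ j ∈ range (k + 1), G j (k - j) := by
    intro k hk
    have hk : k ≤ n := mem_range_succ_iff.mp hk
    have hBC := pfaff_saalschutz k (D - B) (D - C) D
    rw [sub_sub_cancel, sub_sub_cancel] at hBC
    calc _ = ((-1) ^ k * n.choose k * poch A k * poch (D + k) (n - k) * poch (E + k) (n - k) *
            poch (F + k) (n - k)) * (poch B k * poch C k) := by ring
      _ = _ := by
        rw [← hBC, mul_sum]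
        refine sum_congr rfl fun j hj => ?_
        obtain ⟨m, rfl⟩ := Nat.exists_eq_add_of_le (mem_range_succ_iff.mp hj)
        have hch : (n.choose (j + m) : ℂ) * (j + m).choose j = n.choose j * (n - j).choose m := by
          have := Nat.choose_mul (n := n) (Nat.le_add_right j m)
          rw [Nat.add_sub_cancel_left] at this
          exact_mod_cast this
        have hD := poch_mul_poch_sub (D + j) (show m ≤ n - j by omega)
        simp only [hG, saalschutzTerm, Nat.add_sub_cancel_left, Nat.cast_add, ← add_assoc,
          ← Nat.sub_sub, pow_add, poch_add A j m, show D - (D - B) - (D - C) = B + C - D by ring,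
          ← hD]
        linear_combination ((-1) ^ j * (-1) ^ m * poch A j * poch (A + j) m * poch (D - B) j *
          poch (D - C) j * poch (B + C - D) m * poch (D + j) m * poch (D + j + m) (n - j - m) *
          poch (E + j + m) (n - j - m) * poch (F + j + m) (n - j - m)) * hch
  have hinner : ∀ j ∈ range (n + 1), ∑ m ∈ range (n + 1 - j), G j m =
      (-1) ^ n * (n.choose j * poch A j * poch (D - B) j * poch (D - C) j *
        poch (D + j) (n - j) * poch (E - A) (n - j) * poch (A + 1 - n - F + j) (n - j)) := by
    intro j hj
    have hj : j ≤ n := mem_range_succ_iff.mp hj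
    have hsum := pfaff_saalschutz_balanced (n - j) (A + j) (B + C - D) (E + j) (F + j)
      (by push_cast [Nat.cast_sub hj]; linear_combination hbal)
    rw [show E + j - (A + j) = E - A by ring,
      show E + j - (B + C - D) = A + 1 - n - F + j by linear_combination hbal] at hsum
    have hsign : (-1 : ℂ) ^ n = (-1) ^ j * (-1) ^ (n - j) := by
      rw [← pow_add, Nat.add_sub_cancel' hj]
    simp only [hG]
    rw [show n + 1 - j = n - j + 1 by omega, ← mul_sum, hsum, hsign]
    ring
  rw [sum_congr rfl hexpand, sum_range_diag_flip, sum_congr rfl hinner, mul_sum]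

lemma whipple_lhs_summand_eq {n k : ℕ} (hk : k ≤ n) (A B C D E F : ℂ) (hDk : poch D k ≠ 0)
    (hEk : poch E k ≠ 0) (hFk : poch F k ≠ 0) (hn : poch D n * poch E n * poch F n ≠ 0) :
    poch (-(n : ℂ)) k * poch A k * poch B k * poch C k /
        ((k.factorial : ℂ) * poch D k * poch E k * poch F k) =
      (-1) ^ k * n.choose k * poch A k * poch B k * poch C k * poch (D + k) (n - k) *
        poch (E + k) (n - k) * poch (F + k) (n - k) / (poch D n * poch E n * poch F n) := by
  have hfact : (k.factorial : ℂ) ≠ 0 := Nat.cast_ne_zero.mpr k.factorial_ne_zero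
  rw [div_eq_div_iff (by simp [hfact, hDk, hEk, hFk]) hn, poch_neg_natCast,
    ← poch_mul_poch_sub D hk, ← poch_mul_poch_sub E hk, ← poch_mul_poch_sub F hk]
  ring

lemma whipple_rhs_summand_eq {n j : ℕ} (hj : j ≤ n) (A B C D E F : ℂ) (hDj : poch D j ≠ 0)
    (hEj : poch (A + 1 - n - E) j ≠ 0) (hFj : poch (A + 1 - n - F) j ≠ 0)
    (hn : poch D n * poch E n * poch F n ≠ 0) :
    poch (E - A) n * poch (F - A) n / (poch E n * poch F n) *
        (poch (-(n : ℂ)) j * poch A j * poch (D - B) j * poch (D - C) j /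
          ((j.factorial : ℂ) * poch D j * poch (A + 1 - n - E) j * poch (A + 1 - n - F) j)) =
      (-1) ^ n * (n.choose j * poch A j * poch (D - B) j * poch (D - C) j * poch (D + j) (n - j) *
        poch (E - A) (n - j) * poch (A + 1 - n - F + j) (n - j)) /
        (poch D n * poch E n * poch F n) := by
  have hfact : (j.factorial : ℂ) ≠ 0 := Nat.cast_ne_zero.mpr j.factorial_ne_zero
  have hEF : poch E n * poch F n ≠ 0 := fun h => hn (by rw [mul_assoc, h, mul_zero])
  have hE : poch (A + 1 - n - E) j = (-1) ^ j * poch (E - A + (n - j : ℕ)) j :=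
    poch_reflect (by push_cast [Nat.cast_sub hj]; ring)
  have hEA : poch (E - A) n = poch (E - A) (n - j) * poch (E - A + (n - j : ℕ)) j := by
    rw [← poch_add, Nat.sub_add_cancel hj]
  have hFA : poch (F - A) n = (-1) ^ n * poch (A + 1 - n - F) n := poch_reflect (by ring)
  rw [div_mul_div_comm, div_eq_div_iff (mul_ne_zero hEF (by simp [hfact, hDj, hEj, hFj])) hn,
    hE, hEA, hFA, poch_neg_natCast, ← poch_mul_poch_sub (A + 1 - n - F) hj,
    ← poch_mul_poch_sub D hj]
  ring

theorem whipple_transformation (n : ℕ) (A B C D E F : ℂ)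
    (hbal : D + E + F = A + B + C + 1 - (n : ℂ))
    (hD : ∀ k : ℕ, k ≤ n → poch D k ≠ 0)
    (hE : ∀ k : ℕ, k ≤ n → poch E k ≠ 0)
    (hF : ∀ k : ℕ, k ≤ n → poch F k ≠ 0)
    (hE' : ∀ k : ℕ, k ≤ n → poch (A + 1 - (n : ℂ) - E) k ≠ 0)
    (hF' : ∀ k : ℕ, k ≤ n → poch (A + 1 - (n : ℂ) - F) k ≠ 0) :
    ∑ k ∈ Finset.range (n + 1),
        (poch (-(n : ℂ)) k * poch A k * poch B k * poch C k) /
          ((k.factorial : ℂ) * poch D k * poch E k * poch F k)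
      = (poch (E - A) n * poch (F - A) n) / (poch E n * poch F n) *
          ∑ k ∈ Finset.range (n + 1),
            (poch (-(n : ℂ)) k * poch A k * poch (D - B) k * poch (D - C) k) /
              ((k.factorial : ℂ) * poch D k * poch (A + 1 - (n : ℂ) - E) k *
                poch (A + 1 - (n : ℂ) - F) k) := by
  have hn : poch D n * poch E n * poch F n ≠ 0 := by
    simp [hD n le_rfl, hE n le_rfl, hF n le_rfl]
  have hle : ∀ k ∈ range (n + 1), k ≤ n := fun k hk => mem_range_succ_iff.mp hk
  rw [sum_congr rfl fun k hk => whipple_lhs_summand_eq (hle k hk) A B C D E F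
      (hD k (hle k hk)) (hE k (hle k hk)) (hF k (hle k hk)) hn,
    mul_sum, sum_congr rfl fun k hk => whipple_rhs_summand_eq (hle k hk) A B C D E F
      (hD k (hle k hk)) (hE' k (hle k hk)) (hF' k (hle k hk)) hn,
    ← sum_div, ← sum_div, whipple_cleared n A B C D E F hbal, mul_sum]
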